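/- Let H be a real inner product space, Φ : X → H a feature map, x₁, …, x_m ∈ X training points with labels y₁, …, y_m ∈ ℝ, x′₁, …, x′ₙ ∈ X test points, â₁, …, â_m real weights, ĝ ∈ H, and ν ∈ ℝ. Define V_KMM = (1/m)·Σⱼ âⱼ yⱼ and V_R = (1/m)·Σⱼ âⱼ·(yⱼ − ⟪ĝ, Φ(xⱼ)⟫) + (1/n)·Σᵢ ⟪ĝ, Φ(x′ᵢ)⟫. Then for every h ∈ H, |V_R − ν| ≤ |V_KMM − ν| + (‖ĝ − h‖_H + ‖h‖_H) · ‖(1/m)Σⱼ âⱼΦ(xⱼ) − (1/n)Σᵢ Φ(x′ᵢ)‖_H. -/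

import Mathlib

open RealInnerProductSpace

/-!
The control variate turns the reweighted estimator into
`V_R = V_KMM − ⟪ĝ, D⟫`, where `D` is the kernel mean discrepancy of the weights.
Cauchy–Schwarz bounds `|⟪ĝ, D⟫|` by `‖ĝ‖ ‖D‖`, and `‖ĝ‖ ≤ ‖ĝ − h‖ + ‖h‖`.
-/

section

variable {H : Type*} [NormedAddCommGroup H] [InnerProductSpace ℝ H]

theorem abs_real_inner_le_norm_sub_add_norm_mul_norm (g h d : H) :
    |⟪g, d⟫| ≤ (‖g - h‖ + ‖h‖) * ‖d‖ :=
  (abs_real_inner_le_norm g d).trans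
    (mul_le_mul_of_nonneg_right (norm_le_norm_sub_add g h) (norm_nonneg d))

theorem weighted_mean_add_control_variate_eq {ι κ : Type*} [Fintype ι] [Fintype κ]
    (c d : ℝ) (a y : ι → ℝ) (u : ι → H) (v : κ → H) (g : H) :
    c * ∑ j, a j * (y j - ⟪g, u j⟫) + d * ∑ i, ⟪g, v i⟫
      = c * ∑ j, a j * y j - ⟪g, c • ∑ j, a j • u j - d • ∑ i, v i⟫ := by
  simp only [inner_sub_right, real_inner_smul_right, inner_sum, mul_sub, Finset.sum_sub_distrib]
  ring

end

/-- with `V_KMM = (1/m)Σⱼ âⱼyⱼ` and the robust estimator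
`V_R = (1/m)Σⱼ âⱼ(yⱼ − ⟪ĝ, Φ(xⱼ)⟫) + (1/n)Σᵢ ⟪ĝ, Φ(x′ᵢ)⟫`, for every `h ∈ H`,
`|V_R − ν| ≤ |V_KMM − ν| + (‖ĝ − h‖ + ‖h‖)·‖(1/m)Σⱼ âⱼΦ(xⱼ) − (1/n)Σᵢ Φ(x′ᵢ)‖`. -/
theorem stmt15 {X H : Type*} [NormedAddCommGroup H] [InnerProductSpace ℝ H]
    (Φ : X → H) (m n : ℕ) (x : Fin m → X) (y : Fin m → ℝ) (x' : Fin n → X)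
    (a : Fin m → ℝ) (gHat : H) (ν : ℝ) (VKMM VR : ℝ)
    (hVKMM : VKMM = (1 / m : ℝ) * ∑ j, a j * y j)
    (hVR : VR = (1 / m : ℝ) * ∑ j, a j * (y j - ⟪gHat, Φ (x j)⟫)
        + (1 / n : ℝ) * ∑ i, ⟪gHat, Φ (x' i)⟫) :
    ∀ h : H, |VR - ν| ≤ |VKMM - ν| +
      (‖gHat - h‖ + ‖h‖) *
        ‖(1 / m : ℝ) • ∑ j, a j • Φ (x j) - (1 / n : ℝ) • ∑ i, Φ (x' i)‖ := by
  intro h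
  set D : H := (1 / m : ℝ) • ∑ j, a j • Φ (x j) - (1 / n : ℝ) • ∑ i, Φ (x' i)
  have hVR_eq : VR - ν = (VKMM - ν) - ⟪gHat, D⟫ := by
    rw [hVR, weighted_mean_add_control_variate_eq, hVKMM]
    ring
  calc |VR - ν| ≤ |VKMM - ν| + |⟪gHat, D⟫| := hVR_eq ▸ abs_sub _ _
    _ ≤ |VKMM - ν| + (‖gHat - h‖ + ‖h‖) * ‖D‖ :=
      add_le_add_right (abs_real_inner_le_norm_sub_add_norm_mul_norm gHat h D) _
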